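/- arXiv:2006.06189 — 2 statements merged into one kernel-verified Lean document; each statement's English description precedes it below -/
import Mathlib

section
/- Let 0 < δ < 1, β > 0, κ > 1 with βκ < 2(1−δ), n₀ ∈ ℕ, and constants C > 0, T > 0. Then the series Σ_{n=0}^∞ C^n [(n + n₀)!]^{βκ/2} · Γ(1−δ)^n / Γ(1 + n(1−δ)) · T^{n(1−δ)} converges. -/
open Real Filter

lemma aux_gamma (x s : ℝ) (hx : 0 < x) (hs0 : 0 < s) (hs1 : s < 1) :
    Real.Gamma x / Real.Gamma (x + s) ≤ (x + s) ^ (1 - s) / x := by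
  have hxs : 0 < x + s := by linarith
  have hΓxs : 0 < Real.Gamma (x + s) := Real.Gamma_pos_of_pos hxs
  have hΓx1 : 0 < Real.Gamma (x + 1) := Real.Gamma_pos_of_pos (by linarith)
  have hconv := Real.convexOn_log_Gamma.2 (Set.mem_Ioi.mpr hxs)
      (Set.mem_Ioi.mpr (by linarith : (0:ℝ) < x + s + 1)) hs0.le
      (by linarith : (0:ℝ) ≤ 1 - s) (by ring)
  simp only [smul_eq_mul, Function.comp_apply] at hconv
  rw [show s * (x + s) + (1 - s) * (x + s + 1) = x + 1 by ring] at hconv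
  rw [show x + s + 1 = (x + s) + 1 by ring, Real.Gamma_add_one hxs.ne',
    Real.log_mul hxs.ne' hΓxs.ne'] at hconv
  have h1 : Real.Gamma (x + 1) ≤ Real.Gamma (x + s) * (x + s) ^ (1 - s) := by
    calc Real.Gamma (x + 1) = Real.exp (Real.log (Real.Gamma (x + 1))) :=
          (Real.exp_log hΓx1).symm
      _ ≤ Real.exp (Real.log (Real.Gamma (x + s)) + (1 - s) * Real.log (x + s)) := by
          apply Real.exp_le_exp.2; nlinarith [hconv]
      _ = Real.Gamma (x + s) * (x + s) ^ (1 - s) := by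
          rw [Real.exp_add, Real.exp_log hΓxs, Real.rpow_def_of_pos hxs,
            mul_comm (Real.log (x+s))]
  rw [Real.Gamma_add_one hx.ne'] at h1
  rw [div_le_div_iff₀ hΓxs hx]
  nlinarith [h1]

/-- convergence of the series
`Σ_{n=0}^∞ C^n [(n + n₀)!]^{βκ/2} · Γ(1−δ)^n / Γ(1 + n(1−δ)) · T^{n(1−δ)}`. -/
theorem stmt6 (δ β κ C T : ℝ) (hδ0 : 0 < δ) (hδ1 : δ < 1) (hβ : 0 < β) (hκ : 1 < κ)
    (hβκ : β * κ < 2 * (1 - δ)) (n₀ : ℕ) (hC : 0 < C) (hT : 0 < T) :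
    Summable (fun n : ℕ =>
      C ^ n * (((n + n₀).factorial : ℝ)) ^ (β * κ / 2) * Real.Gamma (1 - δ) ^ n /
        Real.Gamma (1 + (n : ℝ) * (1 - δ)) * T ^ ((n : ℝ) * (1 - δ))) := by
  set s : ℝ := 1 - δ with hs_def
  set p : ℝ := β * κ / 2 with hp_def
  have hs0 : 0 < s := by simp only [hs_def]; linarith
  have hs1 : s < 1 := by simp only [hs_def]; linarith
  have hp0 : 0 < p := by simp only [hp_def]; nlinarith
  have hps : p < s := by simp only [hp_def, hs_def]; linarith
  have hΓs : 0 < Real.Gamma s := Real.Gamma_pos_of_pos hs0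
  set f : ℕ → ℝ := fun n =>
      C ^ n * (((n + n₀).factorial : ℝ)) ^ p * Real.Gamma s ^ n /
        Real.Gamma (1 + (n : ℝ) * s) * T ^ ((n : ℝ) * s) with hf_def
  have hΓn : ∀ n : ℕ, 0 < Real.Gamma (1 + (n : ℝ) * s) := fun n =>
    Real.Gamma_pos_of_pos (by positivity)
  have hfactpos : ∀ n : ℕ, (0:ℝ) < ((n + n₀).factorial : ℝ) := fun n => by
    exact_mod_cast (n + n₀).factorial_pos
  have hfpos : ∀ n : ℕ, 0 < f n := fun n => by
    have h1 := hΓn n; have h2 := hfactpos n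
    exact mul_pos (div_pos (mul_pos (mul_pos (pow_pos hC n)
      (Real.rpow_pos_of_pos h2 p)) (pow_pos hΓs n)) h1) (Real.rpow_pos_of_pos hT _)
  set g : ℕ → ℝ := fun n =>
      C * ((n + n₀ + 1 : ℕ) : ℝ) ^ p * Real.Gamma s * T ^ s *
        (Real.Gamma (1 + (n : ℝ) * s) / Real.Gamma (1 + (n : ℝ) * s + s)) with hg_def
  have hfg : ∀ n : ℕ, f (n + 1) = f n * g n := by
    intro n
    have hfact : (((n + 1) + n₀).factorial : ℝ)
        = ((n + n₀ + 1 : ℕ) : ℝ) * ((n + n₀).factorial : ℝ) := by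
      rw [show n + 1 + n₀ = (n + n₀) + 1 by ring, Nat.factorial_succ]; push_cast; ring
    have hcast : ((n + 1 : ℕ) : ℝ) * s = (n : ℝ) * s + s := by push_cast; ring
    have hrpowT : T ^ (((n+1 : ℕ) : ℝ) * s) = T ^ ((n : ℝ) * s) * T ^ s := by
      rw [hcast, Real.rpow_add hT]
    have hmulrpow : (((n + n₀ + 1 : ℕ) : ℝ) * ((n + n₀).factorial : ℝ)) ^ p
        = ((n + n₀ + 1 : ℕ) : ℝ) ^ p * ((n + n₀).factorial : ℝ) ^ p :=
      Real.mul_rpow (by positivity) (hfactpos n).le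
    simp only [hf_def, hg_def, hfact, hrpowT, hmulrpow, pow_succ]
    rw [show (1 : ℝ) + ((n:ℕ) + 1 : ℕ) * s = 1 + (n : ℝ) * s + s by push_cast; ring]
    have h1 := (hΓn n).ne'
    have h2 : Real.Gamma (1 + (n : ℝ) * s + s) ≠ 0 :=
      (Real.Gamma_pos_of_pos (by positivity)).ne'
    field_simp
  -- the tail bound
  have hK' : (0:ℝ) < C * Real.Gamma s * T ^ s * ((n₀ + 2 : ℝ)) ^ p * 2 ^ (1 - s) / s := by
    positivity
  set K' : ℝ := C * Real.Gamma s * T ^ s * ((n₀ + 2 : ℝ)) ^ p * 2 ^ (1 - s) / s with hK'_def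
  have hbound : ∀ n : ℕ, 2 ≤ n → g n ≤ K' * (n : ℝ) ^ (p - s) := by
    intro n hn
    have hn2 : (2:ℝ) ≤ (n : ℝ) := by exact_mod_cast hn
    have hnpos : (0:ℝ) < (n:ℝ) := by linarith
    have hx : (0:ℝ) < 1 + (n : ℝ) * s := by positivity
    have hA : ((n + n₀ + 1 : ℕ) : ℝ) ^ p ≤ ((n₀ + 2 : ℝ)) ^ p * (n : ℝ) ^ p := by
      rw [← Real.mul_rpow (by positivity) hnpos.le]
      apply Real.rpow_le_rpow (by positivity) _ hp0.le
      push_cast; nlinarith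
    have hB := aux_gamma (1 + (n : ℝ) * s) s hx hs0 hs1
    have hC1 : (1 + (n:ℝ) * s + s) ^ (1 - s) ≤ (2 * (n:ℝ)) ^ (1 - s) := by
      apply Real.rpow_le_rpow (by positivity) (by nlinarith) (by linarith)
    have hD : (1 + (n:ℝ) * s + s) ^ (1 - s) / (1 + (n:ℝ) * s)
        ≤ (2 * (n:ℝ)) ^ (1 - s) / ((n:ℝ) * s) := by
      apply div_le_div₀ (by positivity) hC1 (by positivity) (by nlinarith)
    have hratio : Real.Gamma (1 + (n : ℝ) * s) / Real.Gamma (1 + (n : ℝ) * s + s)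
        ≤ (2 * (n:ℝ)) ^ (1 - s) / ((n:ℝ) * s) := le_trans hB hD
    have hgn : g n ≤ C * (((n₀ + 2 : ℝ)) ^ p * (n : ℝ) ^ p) * Real.Gamma s * T ^ s *
        ((2 * (n:ℝ)) ^ (1 - s) / ((n:ℝ) * s)) := by
      simp only [hg_def]
      have hpos1 : 0 < Real.Gamma (1 + (n : ℝ) * s) / Real.Gamma (1 + (n : ℝ) * s + s) :=
        div_pos (hΓn n) (Real.Gamma_pos_of_pos (by positivity))
      apply mul_le_mul _ hratio hpos1.le (by positivity)
      apply mul_le_mul_of_nonneg_right _ (Real.rpow_pos_of_pos hT s).le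
      apply mul_le_mul_of_nonneg_right _ hΓs.le
      exact mul_le_mul_of_nonneg_left hA hC.le
    refine hgn.trans (le_of_eq ?_)
    rw [Real.mul_rpow (by norm_num) hnpos.le, hK'_def,
      show (n:ℝ) ^ (p - s) = (n:ℝ) ^ p * (n:ℝ) ^ (1 - s) / (n:ℝ) by
        rw [← Real.rpow_add hnpos, show p - s = p + (1 - s) - 1 by ring,
          Real.rpow_sub hnpos, Real.rpow_one]]
    field_simp
  have htend : Tendsto (fun n : ℕ => K' * (n : ℝ) ^ (p - s)) atTop (nhds 0) := by
    have h0 : Tendsto (fun x : ℝ => x ^ (-(s - p))) atTop (nhds 0) :=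
      tendsto_rpow_neg_atTop (by linarith)
    have := (h0.comp tendsto_natCast_atTop_atTop).const_mul K'
    simpa [mul_zero, neg_sub] using this
  have hev : ∀ᶠ n in atTop, g n ≤ 1 / 2 := by
    filter_upwards [eventually_ge_atTop 2,
      htend.eventually_lt_const (by norm_num : (0:ℝ) < 1/2)] with n hn2 hlt
    exact (hbound n hn2).trans hlt.le
  apply summable_of_ratio_norm_eventually_le (r := 1/2) (by norm_num)
  filter_upwards [hev] with n hgle
  rw [Real.norm_eq_abs, Real.norm_eq_abs, abs_of_pos (hfpos (n+1)), abs_of_pos (hfpos n),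
    hfg n]
  calc f n * g n ≤ f n * (1/2) := mul_le_mul_of_nonneg_left hgle (hfpos n).le
    _ = 1/2 * f n := by ring
end

section
/- Let T > 0 and let (a_n)_{n≥0} be a sequence of nonnegative real numbers with a_0 = 1 satisfying, for all n ≥ 0, a_{n+1} ≤ Σ_{k=0}^{n} 2^k · k! · C(n,k) · a_{n−k} · T^{k+1}, where C(n,k) is the binomial coefficient. Then a_n ≤ 2^n · n! · T^n for all n ≥ 0. -/
/-!
Substituting the bound `2^j j! T^j` for `a (n - k)` into the recursion, every term of the sum
becomes `2^n n! T^(n+1)` because `k! C(n,k) (n-k)! = n!`, so the right-hand side is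
`2^n (n+1)! T^(n+1)`, half of the claimed bound for `a (n+1)`.
-/

open Finset Nat

section

variable {R : Type*} [CommSemiring R]

theorem two_pow_mul_factorial_mul_choose_mul_bound_sub_eq (T : R) {m k : ℕ} (hk : k ≤ m) :
    2 ^ k * (k ! : R) * (m.choose k : R) * (2 ^ (m - k) * ((m - k)! : R) * T ^ (m - k)) *
        T ^ (k + 1) = 2 ^ m * (m ! : R) * T ^ (m + 1) := by
  rw [← Nat.choose_mul_factorial_mul_factorial hk]
  obtain ⟨j, rfl⟩ := Nat.exists_eq_add_of_le hk
  rw [Nat.add_sub_cancel_left]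
  push_cast
  ring

theorem sum_range_two_pow_mul_factorial_mul_choose_mul_bound_sub (T : R) (m : ℕ) :
    ∑ k ∈ range (m + 1),
        2 ^ k * (k ! : R) * (m.choose k : R) * (2 ^ (m - k) * ((m - k)! : R) * T ^ (m - k)) *
          T ^ (k + 1) = 2 ^ m * ((m + 1)! : R) * T ^ (m + 1) := by
  rw [sum_congr rfl fun k hk =>
      two_pow_mul_factorial_mul_choose_mul_bound_sub_eq T (Nat.lt_succ_iff.mp (mem_range.mp hk)),
    sum_const, card_range, nsmul_eq_mul, Nat.factorial_succ]
  push_cast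
  ring

end

theorem stmt8_general (T : ℝ) (hT : 0 < T) (a : ℕ → ℝ) (h0 : a 0 = 1)
    (hrec : ∀ n : ℕ, a (n + 1) ≤ ∑ k ∈ Finset.range (n + 1),
      2 ^ k * (k.factorial : ℝ) * (n.choose k : ℝ) * a (n - k) * T ^ (k + 1)) :
    ∀ n : ℕ, a n ≤ 2 ^ n * (n.factorial : ℝ) * T ^ n := by
  intro n
  induction n using Nat.strong_induction_on with
  | _ n ih =>
  cases n with
  | zero => simp [h0]
  | succ m =>
    calc a (m + 1)
        ≤ ∑ k ∈ range (m + 1),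
            2 ^ k * (k ! : ℝ) * (m.choose k : ℝ) * a (m - k) * T ^ (k + 1) := hrec m
      _ ≤ ∑ k ∈ range (m + 1), 2 ^ k * (k ! : ℝ) * (m.choose k : ℝ) *
            (2 ^ (m - k) * ((m - k)! : ℝ) * T ^ (m - k)) * T ^ (k + 1) := by
          gcongr with k
          exact ih _ (by omega)
      _ = 2 ^ m * ((m + 1)! : ℝ) * T ^ (m + 1) :=
          sum_range_two_pow_mul_factorial_mul_choose_mul_bound_sub T m
      _ ≤ 2 ^ (m + 1) * ((m + 1)! : ℝ) * T ^ (m + 1) := by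
          gcongr
          · norm_num
          · omega

/-- if `a 0 = 1`, `a n ≥ 0` and
`a (n+1) ≤ Σ_{k=0}^{n} 2^k k! C(n,k) a_{n−k} T^{k+1}`, then `a n ≤ 2^n n! T^n`. -/
theorem stmt8 (T : ℝ) (hT : 0 < T) (a : ℕ → ℝ) (ha : ∀ n, 0 ≤ a n) (h0 : a 0 = 1)
    (hrec : ∀ n : ℕ, a (n + 1) ≤ ∑ k ∈ Finset.range (n + 1),
      2 ^ k * (k.factorial : ℝ) * (n.choose k : ℝ) * a (n - k) * T ^ (k + 1)) :
    ∀ n : ℕ, a n ≤ 2 ^ n * (n.factorial : ℝ) * T ^ n :=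
  stmt8_general T hT a h0 hrec
end
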